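/- arXiv:2007.14475 — 3 statements merged into one kernel-verified Lean document; each statement's English description precedes it below -/
import Mathlib

section
/- Suppose m = 1 (a single anomalous node), that D(f_ℓ‖g_ℓ) and D(g_ℓ‖f_ℓ) are finite for every ℓ, and that ∫_{ℝ^L} p_E(x) |log(p̄_α(x)/g(x))| dx < ∞ for every E ∈ ℰ and α ∈ 𝒜. Then the minimizer α* of I_α over 𝒜 is an interior point of the simplex: every entry of α* is strictly positive, i.e., ‖α*‖₀ = |ℰ| = L. -/
open MeasureTheory ProbabilityTheory Filter Finset
open scoped ENNReal NNReal Classical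

namespace MovingAnomaly

/-- The observation space of the sensor network: one real observation per sensor. -/
abbrev Obs (L : ℕ) := Fin L → ℝ

/-- The sample space: an infinite sequence of vector observations.
Coordinate `n : ℕ` carries the observation `X[n+1]` at time `n+1`. -/
abbrev Traj (L : ℕ) := ℕ → Obs L

/-- The collection ℰ of all size-`m` subsets of the `L` sensors. -/
abbrev ESet (L m : ℕ) := {E : Finset (Fin L) // E.card = m}

/-- Membership in the probability simplex 𝒜 over ℰ. -/
def MemSimplex (L m : ℕ) (α : ESet L m → ℝ) : Prop :=
  (∀ E, 0 ≤ α E) ∧ ∑ E : ESet L m, α E = 1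

/-- `d` is a strictly positive probability density on ℝ (w.r.t. Lebesgue measure). -/
structure IsPosDensity (d : ℝ → ℝ) : Prop where
  meas : Measurable d
  pos : ∀ t, 0 < d t
  int_one : ∫ t, d t = 1

/-- Joint non-anomalous density `g(x) = ∏ g_ℓ(x_ℓ)`. -/
def gdens {L : ℕ} (g : Fin L → ℝ → ℝ) (x : Obs L) : ℝ := ∏ ℓ, g ℓ (x ℓ)

/-- Joint density `p_E(x)` when the anomalous sensors are those of `E`. -/
def pdens {L : ℕ} (f g : Fin L → ℝ → ℝ) (E : Finset (Fin L)) (x : Obs L) : ℝ :=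
  ∏ ℓ, if ℓ ∈ E then f ℓ (x ℓ) else g ℓ (x ℓ)

/-- The mixture density `p̄_α(x) = ∑_E α_E p_E(x)`. -/
def pbar {L m : ℕ} (f g : Fin L → ℝ → ℝ) (α : ESet L m → ℝ) (x : Obs L) : ℝ :=
  ∑ E : ESet L m, α E * pdens f g E.1 x

/-- The measure on ℝ with density `d` w.r.t. Lebesgue measure. -/
noncomputable def densMeasure (d : ℝ → ℝ) : Measure ℝ :=
  volume.withDensity fun t => ENNReal.ofReal (d t)

/-- The product measure on `ℝ^L` whose `ℓ`-th marginal has density `d ℓ`. -/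
noncomputable def jointMeasure {L : ℕ} (d : Fin L → ℝ → ℝ) : Measure (Obs L) :=
  Measure.pi fun ℓ => densMeasure (d ℓ)

/-- The measure with joint density `p_E`. -/
noncomputable def pMeasure {L : ℕ} (f g : Fin L → ℝ → ℝ) (E : Finset (Fin L)) :
    Measure (Obs L) :=
  jointMeasure fun ℓ => if ℓ ∈ E then f ℓ else g ℓ

/-- The mixture measure with density `p̄_α`. -/
noncomputable def mixMeasure {L m : ℕ} (f g : Fin L → ℝ → ℝ) (α : ESet L m → ℝ) :
    Measure (Obs L) :=
  ∑ E : ESet L m, ENNReal.ofReal (α E) • pMeasure f g E.1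

/-- `P` is the infinite product measure on the sequence space under which the coordinates
are independent and coordinate `n` has law `μ n`. -/
def IsProductLaw {L : ℕ} (P : Measure (Traj L)) (μ : ℕ → Measure (Obs L)) : Prop :=
  IsProbabilityMeasure P ∧
    iIndepFun (fun n (ω : Traj L) => ω n) P ∧
    ∀ n, P.map (fun ω => ω n) = μ n

/-- The natural filtration: `Fil L k = σ(X[1],…,X[k])`. -/
def Fil (L : ℕ) (k : ℕ) : MeasurableSpace (Traj L) :=
  MeasurableSpace.comap (fun (ω : Traj L) (i : Fin k) => ω i) inferInstance

/-- A stopping time of the natural filtration (valued in ℕ ∪ {∞}, time 0 excluded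
by requiring values ≥ 1 where needed). -/
def IsStopping {L : ℕ} (τ : Traj L → ℕ∞) : Prop :=
  ∀ k : ℕ, MeasurableSet[Fil L k] {ω | τ ω ≤ (k : ℕ∞)}

/-- The quantity `esssup_{τ>ν} E_P[τ - ν | F_ν]`, with the convention that it equals `1`
when `P(τ > ν) = 0`. -/
noncomputable def condDelay {L : ℕ} (P : Measure (Traj L)) (ν : ℕ) (τ : Traj L → ℕ∞) :
    ℝ≥0∞ :=
  if hP : IsFiniteMeasure P then
    haveI := hP
    if P {ω | (ν : ℕ∞) < τ ω} = 0 then 1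
    else
      essSup
        (fun ω => ∫⁻ ω', ((τ ω' - (ν : ℕ∞) : ℕ∞) : ℝ≥0∞) ∂(condExpKernel P (Fil L ν) ω))
        (P.restrict {ω | (ν : ℕ∞) < τ ω})
  else 1

/-- Lorden-type worst-path delay `WADD(τ)`, given the family of measures `PS S ν = P_ν^S`. -/
noncomputable def wadd {L m : ℕ} (PS : (ℕ → ESet L m) → ℕ → Measure (Traj L))
    (τ : Traj L → ℕ∞) : ℝ≥0∞ :=
  ⨆ (S : ℕ → ESet L m) (ν : ℕ), condDelay (PS S ν) ν τ

/-- The delay `\overline{WADD}_α(τ)` for the randomized-anomaly model, given the family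
`Pb ν = P̄_ν^α`. -/
noncomputable def waddBar {L : ℕ} (Pb : ℕ → Measure (Traj L)) (τ : Traj L → ℕ∞) : ℝ≥0∞ :=
  ⨆ ν : ℕ, condDelay (Pb ν) ν τ

/-- Mean time to false alarm `E_∞[τ]` (as an extended nonnegative real). -/
noncomputable def mtfa {L : ℕ} (Pinf : Measure (Traj L)) (τ : Traj L → ℕ∞) : ℝ≥0∞ :=
  ∫⁻ ω, ((τ ω : ℕ∞) : ℝ≥0∞) ∂Pinf

/-- The class `C_γ` of stopping times with mean time to false alarm at least `γ`. -/
def Cgamma {L : ℕ} (Pinf : Measure (Traj L)) (γ : ℝ) (τ : Traj L → ℕ∞) : Prop :=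
  IsStopping τ ∧ ENNReal.ofReal γ ≤ mtfa Pinf τ

/-- The CUSUM statistic driven by the likelihood ratio `lr`:
`W[0] = 0`, `W[k] = max(W[k-1],1) * lr(X[k])`. -/
noncomputable def cusumStat {L : ℕ} (lr : Obs L → ℝ) (ω : Traj L) : ℕ → ℝ
  | 0 => 0
  | k + 1 => max (cusumStat lr ω k) 1 * lr (ω k)

/-- The instantaneous likelihood ratio `p̄_λ(x)/g(x)` of the M-CUSUM test. -/
noncomputable def mlr {L m : ℕ} (f g : Fin L → ℝ → ℝ) (lam : ESet L m → ℝ) (x : Obs L) : ℝ :=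
  pbar f g lam x / gdens g x

/-- The M-CUSUM stopping time `τ_W(λ, b) = inf {k ≥ 1 : W_λ[k] ≥ e^b}` (∞ if no such k). -/
noncomputable def mcusumTime {L m : ℕ} (f g : Fin L → ℝ → ℝ) (lam : ESet L m → ℝ) (b : ℝ)
    (ω : Traj L) : ℕ∞ :=
  sInf {t : ℕ∞ | ∃ k : ℕ, t = (k : ℕ∞) ∧ 1 ≤ k ∧ Real.exp b ≤ cusumStat (mlr f g lam) ω k}

/-- The Kullback–Leibler number `I_α = ∫ p̄_α log(p̄_α/g)`. -/
noncomputable def KLnum {L m : ℕ} (f g : Fin L → ℝ → ℝ) (α : ESet L m → ℝ) : ℝ :=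
  ∫ x : Obs L, pbar f g α x * Real.log (pbar f g α x / gdens g x)

/-- Joint density with the single anomaly at node `ℓ` (case `m = 1`):
`p_ℓ(x) = f_ℓ(x_ℓ) ∏_{r ≠ ℓ} g_r(x_r)`. -/
def pdens1 {L : ℕ} (f g : Fin L → ℝ → ℝ) (ℓ : Fin L) (x : Obs L) : ℝ :=
  ∏ r, if r = ℓ then f r (x r) else g r (x r)

/-- The mixture `p̄_α(x) = ∑_ℓ α_ℓ p_ℓ(x)` (case `m = 1`, `ℰ` identified with `{1,…,L}`). -/
def pbar1 {L : ℕ} (f g : Fin L → ℝ → ℝ) (α : Fin L → ℝ) (x : Obs L) : ℝ :=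
  ∑ ℓ, α ℓ * pdens1 f g ℓ x

/-- The KL number `I_α = ∫ p̄_α log(p̄_α/g)` (case `m = 1`). -/
noncomputable def KLnum1 {L : ℕ} (f g : Fin L → ℝ → ℝ) (α : Fin L → ℝ) : ℝ :=
  ∫ x : Obs L, pbar1 f g α x * Real.log (pbar1 f g α x / gdens g x)


end MovingAnomaly

/-!
Suppose `α*_i = 0` and move `α*` towards the vertex `e_i`: `α_t = (1 - t) α* + t e_i`. Write
`p = p̄_{α*}`, `q = p_i`, `G = g` and `p_t = p + t (q - p) = p̄_{α_t}`. Then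
`I_{α_t} = D(p_t ‖ p) + (1 - t) I_{α*} + t ∫ q log (p / G)`, and `D(p_t ‖ p) = o(t)` by dominated
convergence (convexity of `u log u` supplies the dominating function), so minimality of `α*`
forces `I_{α*} ≤ ∫ q log (p / G)`.

Because `α*_i = 0`, the ratio `p / G = ∑ α*_ℓ f_ℓ(x_ℓ) / g_ℓ(x_ℓ)` does not depend on `x_i`, while
`q` and `G` differ only in their `x_i`-factor, which integrates to `1` in both cases. Hence
`∫ q log (p / G) = ∫ G log (p / G) = -D(G ‖ p)`, and `0 ≤ D(p ‖ G) = I_{α*} ≤ -D(G ‖ p) < 0`.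
The last inequality is strict because `p ≠ G` on a set of positive measure: for `ℓ` with
`α*_ℓ > 0`, the `ℓ`-th marginal of `p` is `α*_ℓ f_ℓ + (1 - α*_ℓ) g_ℓ ≠ g_ℓ`.
-/

open Real Topology

section MulLogDiv

variable {a b : ℝ}

theorem mul_log_div_le_sub (ha : 0 < a) (hb : 0 < b) : a * log (b / a) ≤ b - a := by
  have := log_le_sub_one_of_pos (div_pos hb ha)
  have h : a * (b / a - 1) = b - a := by field_simp
  nlinarith

theorem mul_log_div_lt_sub (ha : 0 < a) (hb : 0 < b) (hab : a ≠ b) :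
    a * log (b / a) < b - a := by
  have := log_lt_sub_one_of_pos (div_pos hb ha) (by rwa [ne_eq, div_eq_one_iff_eq ha.ne', eq_comm])
  have h : a * (b / a - 1) = b - a := by field_simp
  nlinarith

theorem sub_le_mul_log_div (ha : 0 < a) (hb : 0 < b) : b - a ≤ b * log (b / a) := by
  have := mul_log_div_le_sub hb ha
  rw [← inv_div, log_inv] at this
  linarith

theorem add_mul_sub_mul_log_div_le {t : ℝ} (ha : 0 < a) (hb : 0 < b) (ht₀ : 0 ≤ t)
    (ht₁ : t ≤ 1) :
    (a + t * (b - a)) * log ((a + t * (b - a)) / a) ≤ t * (b * log (b / a)) := by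
  have h := convexOn_mul_log.2 (Set.mem_Ici.2 zero_le_one) (Set.mem_Ici.2 (div_pos hb ha).le)
    (sub_nonneg.2 ht₁) ht₀ (sub_add_cancel 1 t)
  have hc : (a + t * (b - a)) / a = (1 - t) • (1 : ℝ) + t • (b / a) := by
    simp only [smul_eq_mul]; field_simp; ring
  simp only [smul_eq_mul, log_one, mul_zero, zero_add, mul_one] at h hc
  calc (a + t * (b - a)) * log ((a + t * (b - a)) / a)
      = a * ((a + t * (b - a)) / a * log ((a + t * (b - a)) / a)) := by field_simp
    _ ≤ a * (t * (b / a * log (b / a))) := by rw [hc]; gcongr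
    _ = t * (b * log (b / a)) := by field_simp

theorem tendsto_add_mul_sub_mul_log_div (ha : 0 < a) (b : ℝ) :
    Tendsto (fun t => (a + t * (b - a)) * log ((a + t * (b - a)) / a) / t) (𝓝[>] 0)
      (𝓝 (b - a)) := by
  have hc : HasDerivAt (fun t : ℝ => a + t * (b - a)) (b - a) 0 := by
    simpa using ((hasDerivAt_id (0 : ℝ)).mul_const (b - a)).const_add a
  have hlog : HasDerivAt (fun t : ℝ => log ((a + t * (b - a)) / a)) ((b - a) / a / 1) 0 := by
    have := (hc.div_const a).log (by simp [ha.ne'])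
    simpa [ha.ne'] using this
  have hd := hc.mul hlog
  simp only [zero_mul, add_zero, div_self ha.ne', log_one, mul_zero, zero_add, div_one] at hd
  rw [mul_div_cancel₀ _ ha.ne'] at hd
  refine hd.tendsto_slope_zero_right.congr fun t => ?_
  simp [div_eq_inv_mul, ha.ne']

theorem abs_add_mul_sub_mul_log_div_le {t : ℝ} (ha : 0 < a) (hb : 0 < b) (ht₀ : 0 ≤ t)
    (ht₁ : t ≤ 1) :
    |(a + t * (b - a)) * log ((a + t * (b - a)) / a)| ≤ t * (|b - a| + |b * log (b / a)|) := by
  have hc : 0 < a + t * (b - a) := by rcases le_total a b with h | h <;> nlinarith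
  have lower := sub_le_mul_log_div ha hc
  have upper := add_mul_sub_mul_log_div_le ha hb ht₀ ht₁
  rw [abs_le]
  constructor <;> nlinarith [neg_abs_le (b - a), le_abs_self (b * log (b / a)),
    abs_nonneg (b - a), abs_nonneg (b * log (b / a))]

end MulLogDiv

section RelativeEntropy

variable {Ω : Type*} [MeasurableSpace Ω] {μ : Measure Ω} {p q G : Ω → ℝ}

theorem tendsto_integral_add_mul_sub_mul_log_div (hp : ∀ x, 0 < p x) (hq : ∀ x, 0 < q x)
    (hpi : Integrable p μ) (hqi : Integrable q μ)
    (hqp : Integrable (fun x => q x * log (q x / p x)) μ) :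
    Tendsto (fun t => (∫ x, (p x + t * (q x - p x)) * log ((p x + t * (q x - p x)) / p x) ∂μ) / t)
      (𝓝[>] 0) (𝓝 (∫ x, q x ∂μ - ∫ x, p x ∂μ)) := by
  rw [← integral_sub hqi hpi]
  simp_rw [← integral_div]
  refine tendsto_integral_filter_of_dominated_convergence
    (fun x => |q x - p x| + |q x * log (q x / p x)|) ?_ ?_ ((hqi.sub hpi).abs.add hqp.abs)
    (ae_of_all _ fun x => tendsto_add_mul_sub_mul_log_div (hp x) (q x))
  · refine Eventually.of_forall fun t => ?_
    have hpm := hpi.aestronglyMeasurable.aemeasurable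
    have hqm := hqi.aestronglyMeasurable.aemeasurable
    fun_prop
  · filter_upwards [self_mem_nhdsWithin, Ioo_mem_nhdsGT one_pos] with t (ht : 0 < t) ht₁
    refine ae_of_all _ fun x => ?_
    rw [norm_div, Real.norm_eq_abs, Real.norm_eq_abs, abs_of_pos ht, div_le_iff₀ ht, mul_comm _ t]
    exact abs_add_mul_sub_mul_log_div_le (hp x) (hq x) ht.le ht₁.2.le

theorem integral_mul_log_div_sub_le_of_forall_le (hp : ∀ x, 0 < p x) (hq : ∀ x, 0 < q x)
    (hG : ∀ x, 0 < G x) (hpi : Integrable p μ) (hqi : Integrable q μ)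
    (hpG : Integrable (fun x => p x * log (p x / G x)) μ)
    (hqpG : Integrable (fun x => q x * log (p x / G x)) μ)
    (hqG : Integrable (fun x => q x * log (q x / G x)) μ)
    (hmin : ∀ t ∈ Set.Ioo (0 : ℝ) 1, ∫ x, p x * log (p x / G x) ∂μ ≤
      ∫ x, (p x + t * (q x - p x)) * log ((p x + t * (q x - p x)) / G x) ∂μ) :
    ∫ x, p x * log (p x / G x) ∂μ - ∫ x, q x * log (p x / G x) ∂μ ≤
      ∫ x, q x ∂μ - ∫ x, p x ∂μ := by
  have hqp : Integrable (fun x => q x * log (q x / p x)) μ := by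
    refine (hqG.sub hqpG).congr (ae_of_all _ fun x => ?_)
    rw [Pi.sub_apply, ← mul_sub, ← log_div (div_pos (hq x) (hG x)).ne' (div_pos (hp x) (hG x)).ne',
      div_div_div_cancel_right₀ (hG x).ne']
  refine ge_of_tendsto (tendsto_integral_add_mul_sub_mul_log_div hp hq hpi hqi hqp) ?_
  filter_upwards [Ioo_mem_nhdsGT one_pos] with t ht
  set c : Ω → ℝ := fun x => p x + t * (q x - p x)
  have hc : ∀ x, 0 < c x := fun x => by
    have := hp x; have := hq x
    rcases le_total (p x) (q x) with h | h <;> nlinarith [ht.1, ht.2]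
  have hcp : Integrable (fun x => c x * log (c x / p x)) μ := by
    have hpm := hpi.aestronglyMeasurable.aemeasurable
    have hqm := hqi.aestronglyMeasurable.aemeasurable
    refine (((hqi.sub hpi).abs.add hqp.abs).const_mul t).mono' (by fun_prop)
      (ae_of_all _ fun x => abs_add_mul_sub_mul_log_div_le (hp x) (hq x) ht.1.le ht.2.le)
  have hsplit : ∀ x, c x * log (c x / G x) =
      c x * log (c x / p x) + (1 - t) * (p x * log (p x / G x)) + t * (q x * log (p x / G x)) := by
    intro x
    rw [← div_mul_div_cancel₀ (a := c x) (c := G x) (hp x).ne',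
      log_mul (div_pos (hc x) (hp x)).ne' (div_pos (hp x) (hG x)).ne']
    ring
  have hI : ∫ x, c x * log (c x / G x) ∂μ = ∫ x, c x * log (c x / p x) ∂μ +
      (1 - t) * ∫ x, p x * log (p x / G x) ∂μ + t * ∫ x, q x * log (p x / G x) ∂μ := by
    simp_rw [hsplit]
    rw [integral_add, integral_add hcp (hpG.const_mul _), integral_const_mul, integral_const_mul]
    exacts [hcp.add (hpG.const_mul _), hqpG.const_mul _]
  rw [le_div_iff₀ ht.1]
  linarith [hmin t ht]

theorem integral_sub_le_integral_mul_log_div (hp : ∀ x, 0 < p x) (hG : ∀ x, 0 < G x)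
    (hpi : Integrable p μ) (hGi : Integrable G μ)
    (hpG : Integrable (fun x => p x * log (p x / G x)) μ) :
    ∫ x, p x ∂μ - ∫ x, G x ∂μ ≤ ∫ x, p x * log (p x / G x) ∂μ := by
  rw [← integral_sub hpi hGi]
  exact integral_mono (hpi.sub hGi) hpG fun x => sub_le_mul_log_div (hG x) (hp x)

theorem integral_mul_log_div_lt_sub (hp : ∀ x, 0 < p x) (hG : ∀ x, 0 < G x)
    (hpi : Integrable p μ) (hGi : Integrable G μ)
    (hGp : Integrable (fun x => G x * log (p x / G x)) μ) (hne : ¬ p =ᵐ[μ] G) :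
    ∫ x, G x * log (p x / G x) ∂μ < ∫ x, p x ∂μ - ∫ x, G x ∂μ := by
  rw [← integral_sub hpi hGi, ← sub_pos, ← integral_sub (f := fun x => p x - G x) (hpi.sub hGi) hGp,
    integral_pos_iff_support_of_nonneg
      (fun x => sub_nonneg.2 (mul_log_div_le_sub (hG x) (hp x))) ((hpi.sub hGi).sub hGp)]
  refine (pos_iff_ne_zero.2 fun h => hne (ae_iff.2 h)).trans_le (measure_mono fun x hx => ?_)
  exact (sub_pos.2 (mul_log_div_lt_sub (hG x) (hp x) (Ne.symm hx))).ne'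

end RelativeEntropy

section CoordinateSplit

theorem integral_mul_of_update_invariant {n : ℕ} {i : Fin (n + 1)} (u : ℝ → ℝ)
    {K : (Fin (n + 1) → ℝ) → ℝ} (hK : ∀ x t, K (Function.update x i t) = K x) :
    ∫ x, u (x i) * K x = (∫ t, u t) * ∫ y, K (i.insertNth 0 y) := by
  rw [← (volume_preserving_piFinSuccAbove (fun _ => ℝ) i).symm.integral_comp',
    ← integral_prod_mul]
  refine integral_congr_ae (ae_of_all _ fun z => ?_)
  simp only [MeasurableEquiv.piFinSuccAbove_symm_apply, Fin.insertNthEquiv_apply,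
    Fin.insertNth_apply_same]
  change u z.1 * K (Fin.insertNth (α := fun _ => ℝ) i z.1 z.2) = _
  rw [← Fin.update_insertNth (α := fun _ => ℝ) i 0 z.1 z.2, hK]

theorem lintegral_mul_of_update_invariant {n : ℕ} {i : Fin (n + 1)} {u : ℝ → ℝ≥0∞}
    (hu : Measurable u) {K : (Fin (n + 1) → ℝ) → ℝ≥0∞} (hKm : Measurable K)
    (hK : ∀ x t, K (Function.update x i t) = K x) :
    ∫⁻ x, u (x i) * K x = (∫⁻ t, u t) * ∫⁻ y, K (i.insertNth 0 y) := by
  have hK0 : Measurable fun y => K (i.insertNth 0 y) :=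
    hKm.comp ((MeasurableEquiv.piFinSuccAbove (fun _ => ℝ) i).symm.measurable.comp
      measurable_prodMk_left)
  rw [← (volume_preserving_piFinSuccAbove (fun _ => ℝ) i).symm.lintegral_comp_emb
      (MeasurableEquiv.measurableEmbedding _),
    ← lintegral_prod_mul hu.aemeasurable hK0.aemeasurable]
  refine lintegral_congr fun z => ?_
  simp only [MeasurableEquiv.piFinSuccAbove_symm_apply, Fin.insertNthEquiv_apply,
    Fin.insertNth_apply_same]
  change u z.1 * K (Fin.insertNth (α := fun _ => ℝ) i z.1 z.2) = _
  rw [← Fin.update_insertNth (α := fun _ => ℝ) i 0 z.1 z.2, hK]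

variable {L : ℕ} {i : Fin L}

theorem integral_mul_congr_of_update_invariant {u v : ℝ → ℝ} (huv : ∫ t, u t = ∫ t, v t)
    {K : (Fin L → ℝ) → ℝ} (hK : ∀ x t, K (Function.update x i t) = K x) :
    ∫ x, u (x i) * K x = ∫ x, v (x i) * K x := by
  obtain ⟨n, rfl⟩ : ∃ n, L = n + 1 := Nat.exists_eq_succ_of_ne_zero i.pos.ne'
  rw [integral_mul_of_update_invariant u hK, integral_mul_of_update_invariant v hK, huv]

theorem lintegral_mul_congr_of_update_invariant {u v : ℝ → ℝ≥0∞} (hu : Measurable u)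
    (hv : Measurable v) (huv : ∫⁻ t, u t = ∫⁻ t, v t) {K : (Fin L → ℝ) → ℝ≥0∞}
    (hKm : Measurable K) (hK : ∀ x t, K (Function.update x i t) = K x) :
    ∫⁻ x, u (x i) * K x = ∫⁻ x, v (x i) * K x := by
  obtain ⟨n, rfl⟩ : ∃ n, L = n + 1 := Nat.exists_eq_succ_of_ne_zero i.pos.ne'
  rw [lintegral_mul_of_update_invariant hu hKm hK, lintegral_mul_of_update_invariant hv hKm hK,
    huv]

theorem MeasureTheory.Integrable.mul_congr_of_update_invariant {u v : ℝ → ℝ} (hu : Measurable u)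
    (hv : Measurable v) (huv : ∫⁻ t, ‖u t‖ₑ = ∫⁻ t, ‖v t‖ₑ) {K : (Fin L → ℝ) → ℝ}
    (hKm : Measurable K) (hK : ∀ x t, K (Function.update x i t) = K x)
    (h : Integrable (fun x => u (x i) * K x)) : Integrable (fun x => v (x i) * K x) := by
  refine ⟨((hv.comp (measurable_pi_apply i)).mul hKm).aestronglyMeasurable, ?_⟩
  have hfin := h.2
  simp only [HasFiniteIntegral, enorm_mul] at hfin ⊢
  rwa [← lintegral_mul_congr_of_update_invariant hu.enorm hv.enorm huv hKm.enorm
    fun x t => by rw [hK]]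

end CoordinateSplit

theorem exists_pos_of_mem_stdSimplex {ι : Type*} [Fintype ι] {α : ι → ℝ}
    (hα : α ∈ stdSimplex ℝ ι) : ∃ i, 0 < α i := by
  obtain ⟨i, -, hi⟩ := exists_lt_of_sum_lt (show ∑ _ : ι, (0 : ℝ) < ∑ r, α r by simp [hα.2])
  exact ⟨i, hi⟩

namespace MovingAnomaly

section ProductDensity

variable {L : ℕ} {d : Fin L → ℝ → ℝ}

theorem IsPosDensity.integrable {u : ℝ → ℝ} (hu : IsPosDensity u) : Integrable u :=
  Integrable.of_integral_ne_zero (by rw [hu.int_one]; exact one_ne_zero)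

theorem IsPosDensity.lintegral_enorm {u : ℝ → ℝ} (hu : IsPosDensity u) : ∫⁻ t, ‖u t‖ₑ = 1 := by
  rw [← ofReal_integral_norm_eq_lintegral_enorm hu.integrable]
  simp [Real.norm_of_nonneg (hu.pos _).le, hu.int_one]

theorem IsPosDensity.update (hd : ∀ r, IsPosDensity (d r)) {u : ℝ → ℝ} (hu : IsPosDensity u)
    (i r : Fin L) : IsPosDensity (Function.update d i u r) := by
  rcases eq_or_ne r i with rfl | h
  · simpa using hu
  · simpa [h] using hd r

theorem gdens_pos (hd : ∀ r, IsPosDensity (d r)) (x : Obs L) : 0 < gdens d x :=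
  prod_pos fun r _ => (hd r).pos _

theorem measurable_gdens (hd : ∀ r, IsPosDensity (d r)) : Measurable (gdens d) :=
  Finset.measurable_prod _ fun r _ => (hd r).meas.comp (measurable_pi_apply r)

theorem integrable_gdens (hd : ∀ r, Integrable (d r)) : Integrable (gdens d) :=
  Integrable.fintype_prod hd

theorem integral_gdens (hd : ∀ r, IsPosDensity (d r)) : ∫ x, gdens d x = 1 := by
  simp only [gdens]
  rw [integral_fintype_prod_volume_eq_prod]
  exact prod_eq_one fun r _ => (hd r).int_one

theorem gdens_eq_mul_prod_erase (d : Fin L → ℝ → ℝ) (i : Fin L) (x : Obs L) :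
    gdens d x = d i (x i) * ∏ r ∈ univ.erase i, d r (x r) :=
  (mul_prod_erase univ _ (mem_univ i)).symm

theorem gdens_update (d : Fin L → ℝ → ℝ) (i : Fin L) (u : ℝ → ℝ) (x : Obs L) :
    gdens (Function.update d i u) x = u (x i) * ∏ r ∈ univ.erase i, d r (x r) := by
  rw [gdens_eq_mul_prod_erase _ i, Function.update_self]
  exact congrArg _ (prod_congr rfl fun r hr => by rw [Function.update_of_ne (ne_of_mem_erase hr)])

theorem prod_erase_apply_update (d : Fin L → ℝ → ℝ) (i : Fin L) (x : Obs L) (t : ℝ) :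
    ∏ r ∈ univ.erase i, d r (Function.update x i t r) = ∏ r ∈ univ.erase i, d r (x r) :=
  prod_congr rfl fun r hr => by rw [Function.update_of_ne (ne_of_mem_erase hr)]

theorem gdens_mul_indicator (d : Fin L → ℝ → ℝ) (i : Fin L) (S : Set ℝ) (x : Obs L) :
    gdens d x * S.indicator 1 (x i) = gdens (Function.update d i (S.indicator (d i))) x := by
  rw [gdens_update, gdens_eq_mul_prod_erase _ i, Set.indicator_apply, Set.indicator_apply]
  split_ifs <;> simp

theorem integral_gdens_mul_indicator (hd : ∀ r, IsPosDensity (d r)) (i : Fin L) {S : Set ℝ}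
    (hS : MeasurableSet S) : ∫ x, gdens d x * S.indicator 1 (x i) = ∫ t in S, d i t := by
  simp_rw [gdens_mul_indicator]
  simp only [gdens]
  rw [integral_fintype_prod_volume_eq_prod, ← mul_prod_erase univ _ (mem_univ i),
    Function.update_self, integral_indicator hS,
    prod_eq_one fun r hr => by rw [Function.update_of_ne (ne_of_mem_erase hr), (hd r).int_one],
    mul_one]

end ProductDensity

section Mixture

variable {L : ℕ} {f g : Fin L → ℝ → ℝ}

theorem pdens1_eq_gdens_update (f g : Fin L → ℝ → ℝ) (ℓ : Fin L) :
    pdens1 f g ℓ = gdens (Function.update g ℓ (f ℓ)) := by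
  funext x
  refine prod_congr rfl fun r _ => ?_
  rcases eq_or_ne r ℓ with rfl | h <;> simp [*]

theorem pdens1_eq_mul_prod_erase (ℓ : Fin L) (x : Obs L) :
    pdens1 f g ℓ x = f ℓ (x ℓ) * ∏ r ∈ univ.erase ℓ, g r (x r) := by
  rw [pdens1_eq_gdens_update, gdens_update]

theorem pdens1_div_gdens (hg : ∀ ℓ, IsPosDensity (g ℓ)) (ℓ : Fin L) (x : Obs L) :
    pdens1 f g ℓ x / gdens g x = f ℓ (x ℓ) / g ℓ (x ℓ) := by
  rw [pdens1_eq_mul_prod_erase, gdens_eq_mul_prod_erase _ ℓ,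
    mul_div_mul_right _ _ (prod_pos fun r _ => (hg r).pos _).ne']

theorem pbar1_div_gdens (hg : ∀ ℓ, IsPosDensity (g ℓ)) (α : Fin L → ℝ) (x : Obs L) :
    pbar1 f g α x / gdens g x = ∑ ℓ, α ℓ * (f ℓ (x ℓ) / g ℓ (x ℓ)) := by
  simp only [pbar1, sum_div, mul_div_assoc, pdens1_div_gdens hg]

theorem pbar1_div_gdens_update (hg : ∀ ℓ, IsPosDensity (g ℓ)) {α : Fin L → ℝ} {i : Fin L}
    (hi : α i = 0) (x : Obs L) (t : ℝ) :
    pbar1 f g α (Function.update x i t) / gdens g (Function.update x i t) =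
      pbar1 f g α x / gdens g x := by
  simp only [pbar1_div_gdens hg]
  refine sum_congr rfl fun ℓ _ => ?_
  rcases eq_or_ne ℓ i with rfl | h
  · simp [hi]
  · rw [Function.update_of_ne h]

theorem pbar1_single (f g : Fin L → ℝ → ℝ) (ℓ : Fin L) :
    pbar1 f g (Pi.single ℓ 1) = pdens1 f g ℓ := by
  funext x
  simp [pbar1, Pi.single_apply]

theorem pbar1_convex_comb (f g : Fin L → ℝ → ℝ) (α β : Fin L → ℝ) (t : ℝ) (x : Obs L) :
    pbar1 f g ((1 - t) • α + t • β) x = pbar1 f g α x + t * (pbar1 f g β x - pbar1 f g α x) := by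
  simp only [pbar1, Pi.add_apply, Pi.smul_apply, smul_eq_mul, add_mul, sum_add_distrib, mul_assoc,
    ← mul_sum]
  ring

variable (hf : ∀ ℓ, IsPosDensity (f ℓ)) (hg : ∀ ℓ, IsPosDensity (g ℓ))
include hf hg

theorem pdens1_pos (ℓ : Fin L) (x : Obs L) : 0 < pdens1 f g ℓ x := by
  rw [pdens1_eq_gdens_update]
  exact gdens_pos (IsPosDensity.update hg (hf ℓ) ℓ) x

theorem measurable_pdens1 (ℓ : Fin L) : Measurable (pdens1 f g ℓ) := by
  rw [pdens1_eq_gdens_update]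
  exact measurable_gdens (IsPosDensity.update hg (hf ℓ) ℓ)

theorem integrable_pdens1 (ℓ : Fin L) : Integrable (pdens1 f g ℓ) := by
  rw [pdens1_eq_gdens_update]
  exact integrable_gdens fun r => (IsPosDensity.update hg (hf ℓ) ℓ r).integrable

theorem integral_pdens1 (ℓ : Fin L) : ∫ x, pdens1 f g ℓ x = 1 := by
  rw [pdens1_eq_gdens_update]
  exact integral_gdens (IsPosDensity.update hg (hf ℓ) ℓ)

theorem pbar1_pos {α : Fin L → ℝ} (hα : α ∈ stdSimplex ℝ (Fin L)) (x : Obs L) :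
    0 < pbar1 f g α x := by
  obtain ⟨i, hi⟩ := exists_pos_of_mem_stdSimplex hα
  exact sum_pos' (fun ℓ _ => mul_nonneg (hα.1 ℓ) (pdens1_pos hf hg ℓ x).le)
    ⟨i, mem_univ i, mul_pos hi (pdens1_pos hf hg i x)⟩

theorem measurable_pbar1 (α : Fin L → ℝ) : Measurable (pbar1 f g α) :=
  Finset.measurable_sum _ fun ℓ _ => (measurable_pdens1 hf hg ℓ).const_mul (α ℓ)

theorem integrable_pbar1 (α : Fin L → ℝ) : Integrable (pbar1 f g α) :=
  integrable_finsetSum _ fun ℓ _ => (integrable_pdens1 hf hg ℓ).const_mul (α ℓ)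

theorem integral_pbar1 (α : Fin L → ℝ) : ∫ x, pbar1 f g α x = ∑ ℓ, α ℓ := by
  simp only [pbar1]
  rw [integral_finsetSum _ fun ℓ _ => (integrable_pdens1 hf hg ℓ).const_mul (α ℓ)]
  simp [integral_const_mul, integral_pdens1 hf hg]

theorem integral_pbar1_mul_indicator {α : Fin L → ℝ} (hα : ∑ ℓ, α ℓ = 1) (i : Fin L)
    {S : Set ℝ} (hS : MeasurableSet S) :
    ∫ x, pbar1 f g α x * S.indicator 1 (x i) =
      (∫ t in S, g i t) + α i * ((∫ t in S, f i t) - ∫ t in S, g i t) := by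
  have hℓ : ∀ ℓ, ∫ x, pdens1 f g ℓ x * S.indicator 1 (x i) =
      (∫ t in S, g i t) + if ℓ = i then (∫ t in S, f i t) - ∫ t in S, g i t else 0 := by
    intro ℓ
    rw [pdens1_eq_gdens_update, integral_gdens_mul_indicator (IsPosDensity.update hg (hf ℓ) ℓ) i hS]
    rcases eq_or_ne ℓ i with rfl | h
    · simp
    · simp [Function.update_of_ne h.symm, h]
  have hint : ∀ ℓ, Integrable fun x => pdens1 f g ℓ x * S.indicator 1 (x i) := fun ℓ => by
    simp_rw [pdens1_eq_gdens_update, gdens_mul_indicator]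
    exact integrable_gdens fun r => by
      rcases eq_or_ne r i with rfl | h
      · simpa using (IsPosDensity.update hg (hf ℓ) ℓ r).integrable.indicator hS
      · simpa [h] using (IsPosDensity.update hg (hf ℓ) ℓ r).integrable
  simp only [pbar1, sum_mul, mul_assoc]
  rw [integral_finsetSum _ fun ℓ _ => (hint ℓ).const_mul (α ℓ)]
  simp only [integral_const_mul, hℓ, mul_add, sum_add_distrib, ← sum_mul, hα, mul_ite, mul_zero,
    sum_ite_eq', mem_univ, if_true, one_mul]

theorem not_pbar1_ae_eq_gdens (hfg : ∀ ℓ, 0 < volume {t | f ℓ t ≠ g ℓ t}) {α : Fin L → ℝ}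
    (hα : α ∈ stdSimplex ℝ (Fin L)) : ¬ pbar1 f g α =ᵐ[volume] gdens g := by
  intro h
  obtain ⟨i, hi⟩ := exists_pos_of_mem_stdSimplex hα
  refine (hfg i).ne' (ae_iff.1 (ae_eq_of_forall_setIntegral_eq_of_sigmaFinite
    (fun _ _ _ => (hf i).integrable.integrableOn) (fun _ _ _ => (hg i).integrable.integrableOn)
    fun S hS _ => ?_))
  have key : ∫ x, pbar1 f g α x * S.indicator 1 (x i) = ∫ x, gdens g x * S.indicator 1 (x i) :=
    integral_congr_ae (h.mono fun x hx => by simp only [hx])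
  rw [integral_pbar1_mul_indicator hf hg hα.2 i hS, integral_gdens_mul_indicator hg i hS,
    add_eq_left, mul_eq_zero, sub_eq_zero] at key
  exact key.resolve_left hi.ne'

theorem integrable_pdens1_mul_log {α : Fin L → ℝ} {ℓ : Fin L}
    (h : ∫⁻ x, ENNReal.ofReal (pdens1 f g ℓ x * |log (pbar1 f g α x / gdens g x)|) < ⊤) :
    Integrable fun x => pdens1 f g ℓ x * log (pbar1 f g α x / gdens g x) := by
  refine ⟨((measurable_pdens1 hf hg ℓ).mul
    ((measurable_pbar1 hf hg α).div (measurable_gdens hg)).log).aestronglyMeasurable, ?_⟩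
  rw [hasFiniteIntegral_iff_norm]
  simpa only [norm_mul, Real.norm_eq_abs, abs_of_pos (pdens1_pos hf hg ℓ _)] using h

theorem integrable_pbar1_mul_log {α : Fin L → ℝ}
    (h : ∀ ℓ, ∫⁻ x, ENNReal.ofReal (pdens1 f g ℓ x * |log (pbar1 f g α x / gdens g x)|) < ⊤) :
    Integrable fun x => pbar1 f g α x * log (pbar1 f g α x / gdens g x) := by
  refine (integrable_finsetSum univ fun ℓ _ =>
    (integrable_pdens1_mul_log hf hg (h ℓ)).const_mul (α ℓ)).congr (ae_of_all _ fun x => ?_)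
  simp only [← mul_assoc, ← sum_mul]
  rfl

theorem integral_pdens1_mul_of_update_invariant {ℓ : Fin L} {H : Obs L → ℝ}
    (hH : ∀ x t, H (Function.update x ℓ t) = H x) :
    ∫ x, pdens1 f g ℓ x * H x = ∫ x, gdens g x * H x := by
  simp only [pdens1_eq_mul_prod_erase, gdens_eq_mul_prod_erase g ℓ, mul_assoc]
  exact integral_mul_congr_of_update_invariant ((hf ℓ).int_one.trans (hg ℓ).int_one.symm)
    fun x t => by rw [prod_erase_apply_update, hH]

theorem integrable_gdens_mul_of_pdens1_mul {ℓ : Fin L} {H : Obs L → ℝ} (hHm : Measurable H)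
    (hH : ∀ x t, H (Function.update x ℓ t) = H x)
    (h : Integrable fun x => pdens1 f g ℓ x * H x) : Integrable fun x => gdens g x * H x := by
  simp only [pdens1_eq_mul_prod_erase, gdens_eq_mul_prod_erase g ℓ, mul_assoc] at h ⊢
  refine h.mul_congr_of_update_invariant (hf ℓ).meas (hg ℓ).meas
    ((hf ℓ).lintegral_enorm.trans (hg ℓ).lintegral_enorm.symm) ?_
    fun x t => by rw [prod_erase_apply_update, hH]
  exact (Finset.measurable_prod _ fun r _ => (hg r).meas.comp (measurable_pi_apply r)).mul hHm

end Mixture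

theorem pos_of_isMinOn_KLnum1 {L : ℕ} {f g : Fin L → ℝ → ℝ} (hf : ∀ ℓ, IsPosDensity (f ℓ))
    (hg : ∀ ℓ, IsPosDensity (g ℓ)) (hfg : ∀ ℓ, 0 < volume {t | f ℓ t ≠ g ℓ t})
    (habs : ∀ ℓ, ∀ α ∈ stdSimplex ℝ (Fin L),
      ∫⁻ x, ENNReal.ofReal (pdens1 f g ℓ x * |log (pbar1 f g α x / gdens g x)|) < ⊤)
    {α : Fin L → ℝ} (hα : α ∈ stdSimplex ℝ (Fin L))
    (hmin : IsMinOn (KLnum1 f g) (stdSimplex ℝ (Fin L)) α) (i : Fin L) : 0 < α i := by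
  refine (hα.1 i).lt_of_ne' fun hi => ?_
  set p := pbar1 f g α
  set q := pdens1 f g i
  set G := gdens g
  have hp := pbar1_pos hf hg hα
  have hG := gdens_pos hg
  have hpi := integrable_pbar1 hf hg α
  have hqi := integrable_pdens1 hf hg i
  have hGi := integrable_gdens fun r => (hg r).integrable
  have hpG := integrable_pbar1_mul_log hf hg fun ℓ => habs ℓ α hα
  have hqpG : Integrable fun x => q x * log (p x / G x) :=
    integrable_pdens1_mul_log hf hg (habs i α hα)
  have hqG : Integrable fun x => q x * log (q x / G x) := by
    simpa only [pbar1_single] using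
      integrable_pdens1_mul_log hf hg (habs i _ (single_mem_stdSimplex ℝ i))
  have hH : ∀ x t, log (p (Function.update x i t) / G (Function.update x i t)) =
      log (p x / G x) := fun x t => by
    simp only [p, G, pbar1_div_gdens_update hg hi]
  have hJ : ∫ x, q x * log (p x / G x) = ∫ x, G x * log (p x / G x) :=
    integral_pdens1_mul_of_update_invariant hf hg hH
  have hGpG : Integrable fun x => G x * log (p x / G x) :=
    integrable_gdens_mul_of_pdens1_mul hf hg
      ((measurable_pbar1 hf hg α).div (measurable_gdens hg)).log hH hqpG
  have hfirst := integral_mul_log_div_sub_le_of_forall_le hp (pdens1_pos hf hg i) hG hpi hqi hpG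
    hqpG hqG fun t ht => by
      have hmem : (1 - t) • α + t • Pi.single i 1 ∈ stdSimplex ℝ (Fin L) :=
        convex_stdSimplex ℝ (Fin L) hα (single_mem_stdSimplex ℝ i) (by linarith [ht.2]) ht.1.le
          (by ring)
      simpa only [KLnum1, pbar1_convex_comb, pbar1_single] using isMinOn_iff.1 hmin _ hmem
  have hgibbs := integral_sub_le_integral_mul_log_div hp hG hpi hGi hpG
  have hstrict :=
    integral_mul_log_div_lt_sub hp hG hpi hGi hGpG (not_pbar1_ae_eq_gdens hf hg hfg hα)
  have hp₁ : ∫ x, p x = 1 := (integral_pbar1 hf hg α).trans hα.2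
  have hq₁ : ∫ x, q x = 1 := integral_pdens1 hf hg i
  have hG₁ : ∫ x, G x = 1 := integral_gdens hg
  linarith

theorem stmt7_general {L : ℕ}
    (f g : Fin L → ℝ → ℝ)
    (hf : ∀ ℓ, IsPosDensity (f ℓ)) (hg : ∀ ℓ, IsPosDensity (g ℓ))
    (hfg : ∀ ℓ, 0 < volume {t | f ℓ t ≠ g ℓ t})
    (habs : ∀ (ℓ : Fin L) (α : Fin L → ℝ), (∀ r, 0 ≤ α r) → ∑ r, α r = 1 →
      ∫⁻ x : Obs L, ENNReal.ofReal
        (pdens1 f g ℓ x * |Real.log (pbar1 f g α x / gdens g x)|) ∂volume < ⊤)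
    (αstar : Fin L → ℝ) (hαnn : ∀ r, 0 ≤ αstar r) (hαsum : ∑ r, αstar r = 1)
    (hmin : ∀ α : Fin L → ℝ, (∀ r, 0 ≤ α r) → ∑ r, α r = 1 →
      KLnum1 f g αstar ≤ KLnum1 f g α) :
    (∀ ℓ, 0 < αstar ℓ) ∧
      (Finset.univ.filter fun ℓ : Fin L => αstar ℓ ≠ 0).card = L := by
  have hpos : ∀ ℓ, 0 < αstar ℓ :=
    pos_of_isMinOn_KLnum1 hf hg hfg (fun ℓ β hβ => habs ℓ β hβ.1 hβ.2) ⟨hαnn, hαsum⟩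
      (isMinOn_iff.2 fun β hβ => hmin β hβ.1 hβ.2)
  refine ⟨hpos, ?_⟩
  rw [filter_true_of_mem fun ℓ _ => (hpos ℓ).ne', card_univ, Fintype.card_fin]

/-- Interior minimizer in the single-anomaly case `m = 1`.  Under the
stated finiteness assumptions, the minimizer `α*` of `I_α` over the simplex has all
entries strictly positive: `‖α*‖₀ = |ℰ| = L`. -/
theorem stmt7 {L : ℕ} (hL : 1 ≤ L)
    (f g : Fin L → ℝ → ℝ)
    (hf : ∀ ℓ, IsPosDensity (f ℓ)) (hg : ∀ ℓ, IsPosDensity (g ℓ))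
    (hfg : ∀ ℓ, 0 < volume {t | f ℓ t ≠ g ℓ t})
    (hDfg : ∀ ℓ, Integrable (fun t : ℝ => f ℓ t * Real.log (f ℓ t / g ℓ t)) volume)
    (hDgf : ∀ ℓ, Integrable (fun t : ℝ => g ℓ t * Real.log (g ℓ t / f ℓ t)) volume)
    (habs : ∀ (ℓ : Fin L) (α : Fin L → ℝ), (∀ r, 0 ≤ α r) → ∑ r, α r = 1 →
      ∫⁻ x : Obs L, ENNReal.ofReal
        (pdens1 f g ℓ x * |Real.log (pbar1 f g α x / gdens g x)|) ∂volume < ⊤)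
    (hIfin : ∀ α : Fin L → ℝ, (∀ r, 0 ≤ α r) → ∑ r, α r = 1 →
      Integrable (fun x : Obs L => pbar1 f g α x * Real.log (pbar1 f g α x / gdens g x))
        volume)
    (αstar : Fin L → ℝ) (hαnn : ∀ r, 0 ≤ αstar r) (hαsum : ∑ r, αstar r = 1)
    (hmin : ∀ α : Fin L → ℝ, (∀ r, 0 ≤ α r) → ∑ r, α r = 1 →
      KLnum1 f g αstar ≤ KLnum1 f g α) :
    (∀ ℓ, 0 < αstar ℓ) ∧
      (Finset.univ.filter fun ℓ : Fin L => αstar ℓ ≠ 0).card = L :=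
  stmt7_general f g hf hg hfg habs αstar hαnn hαsum hmin

end MovingAnomaly
end

section
/- Let (l_j)_{j ≥ 1} be a sequence of nonnegative real numbers and define W_0 = 0 and W_j = max(W_{j−1}, 1) · l_j for j ≥ 1. Then for every j ≥ 1, ∑_{ν=0}^{j−1} (1 − W_ν)⁺ · ∏_{i=ν+1}^{j} l_i = W_j, where (x)⁺ = max{x, 0}. -/
/-- CUSUM statistic as a weighted sum of likelihood ratios.  Let
`(l_j)_{j≥1}` be nonnegative reals, `W 0 = 0` and `W j = max (W (j-1)) 1 * l j` for
`j ≥ 1`.  Then for every `j ≥ 1`,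
`∑_{ν=0}^{j-1} (1 − W ν)⁺ ∏_{i=ν+1}^{j} l i = W j`. -/
theorem stmt15 (l : ℕ → ℝ) (hl : ∀ j, 0 ≤ l j) (W : ℕ → ℝ) (hW0 : W 0 = 0)
    (hW : ∀ j : ℕ, W (j + 1) = max (W j) 1 * l (j + 1)) :
    ∀ j : ℕ, 1 ≤ j →
      ∑ ν ∈ Finset.range j, max (1 - W ν) 0 * ∏ i ∈ Finset.Icc (ν + 1) j, l i = W j := by
  intro j hj
  induction j with
  | zero => omega
  | succ n ih =>
    rcases Nat.eq_zero_or_pos n with rfl | hn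
    · simp [hW 0, hW0]
    · have key : ∀ ν ∈ Finset.range (n + 1),
          max (1 - W ν) 0 * ∏ i ∈ Finset.Icc (ν + 1) (n + 1), l i
            = (max (1 - W ν) 0 * ∏ i ∈ Finset.Icc (ν + 1) n, l i) * l (n + 1) := by
        intro ν hν
        rw [Finset.mem_range] at hν
        rw [Finset.prod_Icc_succ_top (by omega : ν + 1 ≤ n + 1)]
        ring
      rw [Finset.sum_range_succ, Finset.sum_congr rfl fun ν hν => key ν (by
          simpa using Finset.mem_range.mpr (Nat.lt_succ_of_lt (Finset.mem_range.mp hν))),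
        ← Finset.sum_mul, ih hn, Finset.Icc_self, Finset.prod_singleton, hW n]
      have : W n + max (1 - W n) 0 = max (W n) 1 := by
        rcases le_total (W n) 1 with h | h <;> simp [max_eq_left, max_eq_right, *] <;> linarith
      rw [← this]; ring
end

section
/- Let E and E' be two distinct size-m subsets of {1,…,L}, and assume that for every ℓ the Kullback–Leibler divergences D(f_ℓ‖g_ℓ) and D(g_ℓ‖f_ℓ) are finite and strictly positive. Then ∫_{ℝ^L} p_{E'}(x) log(p_E(x)/g(x)) dx = ∑_{ℓ ∈ E ∩ E'} D(f_ℓ‖g_ℓ) − ∑_{ℓ ∈ E \ E'} D(g_ℓ‖f_ℓ), and consequently ∫_{ℝ^L} p_{E'}(x) log(p_E(x)/g(x)) dx < ∫_{ℝ^L} p_E(x) log(p_E(x)/g(x)) dx = ∑_{ℓ ∈ E} D(f_ℓ‖g_ℓ). -/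
open MeasureTheory ProbabilityTheory Filter Finset
open scoped ENNReal NNReal Classical

namespace MovingAnomaly

/-! Writing `p_E/g = ∏_{ℓ ∈ E} f_ℓ/g_ℓ`, the log-likelihood ratio splits into one-sensor terms.
Under the product law `p_{E'}` each term only sees its own marginal, which is `f_ℓ` on `E ∩ E'`
(giving `D(f_ℓ‖g_ℓ)`) and `g_ℓ` on `E \ E'` (giving `-D(g_ℓ‖f_ℓ)`). Since `E ≠ E'` have the same
size, `E \ E'` is nonempty, so the drift under `p_{E'}` falls short of the one under `p_E` by
`∑_{ℓ ∈ E \ E'} (D(f_ℓ‖g_ℓ) + D(g_ℓ‖f_ℓ)) > 0`. -/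

lemma prod_mul_apply_eq_prod {ι α M : Type*} [Fintype ι] [DecidableEq ι] [CommMonoid M]
    (q : ι → α → M) (φ : α → M) (i₀ : ι) (x : ι → α) :
    (∏ i, q i (x i)) * φ (x i₀) = ∏ i, q i (x i) * if i = i₀ then φ (x i) else 1 := by
  rw [prod_mul_distrib, prod_ite_eq' univ i₀ fun i => φ (x i), if_pos (mem_univ i₀)]

section ProductMeasure

variable {ι α : Type*} [Fintype ι] [DecidableEq ι] [MeasurableSpace α] {μ : ι → Measure α}
  [∀ i, SigmaFinite (μ i)]

lemma integral_pi_prod_mul_apply (q : ι → α → ℝ) (φ : α → ℝ) (i₀ : ι)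
    (hq : ∀ i ≠ i₀, ∫ t, q i t ∂μ i = 1) :
    ∫ x, (∏ i, q i (x i)) * φ (x i₀) ∂Measure.pi μ = ∫ t, q i₀ t * φ t ∂μ i₀ := by
  simp_rw [prod_mul_apply_eq_prod q φ i₀]
  rw [integral_fintype_prod_eq_prod (fun i t => q i t * if i = i₀ then φ t else 1),
    prod_eq_single i₀ (fun i _ hi => by simp [hi, hq i hi]) (fun h => absurd (mem_univ i₀) h)]
  simp

lemma integrable_pi_prod_mul_apply {q : ι → α → ℝ} {φ : α → ℝ} {i₀ : ι}
    (hq : ∀ i ≠ i₀, Integrable (q i) (μ i)) (hφ : Integrable (fun t => q i₀ t * φ t) (μ i₀)) :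
    Integrable (fun x => (∏ i, q i (x i)) * φ (x i₀)) (Measure.pi μ) := by
  simp_rw [prod_mul_apply_eq_prod q φ i₀]
  refine Integrable.fintype_prod (f := fun i t => q i t * if i = i₀ then φ t else 1) fun i => ?_
  by_cases hi : i = i₀
  · subst hi; simpa using hφ
  · simpa [hi] using hq i hi

end ProductMeasure

namespace IsPosDensity

variable {d : ℝ → ℝ}

lemma integrable_s16 (hd : IsPosDensity d) : Integrable d :=
  integrable_of_integral_eq_one hd.int_one

end IsPosDensity

lemma log_div_eq_neg_log_div (a b : ℝ) : Real.log (a / b) = -Real.log (b / a) := by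
  rw [← Real.log_inv, inv_div]

section SensorModel

variable {L : ℕ} {f g : Fin L → ℝ → ℝ}

def sensorDens (f g : Fin L → ℝ → ℝ) (E : Finset (Fin L)) (ℓ : Fin L) : ℝ → ℝ :=
  if ℓ ∈ E then f ℓ else g ℓ

lemma pdens_eq_prod_sensorDens (E : Finset (Fin L)) (x : Obs L) :
    pdens f g E x = ∏ ℓ, sensorDens f g E ℓ (x ℓ) := by
  simp only [pdens, sensorDens, ite_apply]

lemma isPosDensity_sensorDens (hf : ∀ ℓ, IsPosDensity (f ℓ)) (hg : ∀ ℓ, IsPosDensity (g ℓ))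
    (E : Finset (Fin L)) (ℓ : Fin L) : IsPosDensity (sensorDens f g E ℓ) := by
  unfold sensorDens
  split_ifs
  exacts [hf ℓ, hg ℓ]

lemma pdens_div_gdens (hg : ∀ ℓ t, g ℓ t ≠ 0) (E : Finset (Fin L)) (x : Obs L) :
    pdens f g E x / gdens g x = ∏ ℓ ∈ E, f ℓ (x ℓ) / g ℓ (x ℓ) := by
  rw [pdens, gdens, ← prod_div_distrib, ← Fintype.prod_ite_mem E]
  refine prod_congr rfl fun ℓ _ => ?_
  split_ifs
  exacts [rfl, div_self (hg ℓ (x ℓ))]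

lemma log_pdens_div_gdens (hf : ∀ ℓ t, 0 < f ℓ t) (hg : ∀ ℓ t, 0 < g ℓ t)
    (E : Finset (Fin L)) (x : Obs L) :
    Real.log (pdens f g E x / gdens g x) = ∑ ℓ ∈ E, Real.log (f ℓ (x ℓ) / g ℓ (x ℓ)) := by
  rw [pdens_div_gdens (fun ℓ t => (hg ℓ t).ne'), Real.log_prod]
  exact fun ℓ _ => (div_pos (hf ℓ _) (hg ℓ _)).ne'

lemma integral_pdens_mul_log_apply (hf : ∀ ℓ, IsPosDensity (f ℓ)) (hg : ∀ ℓ, IsPosDensity (g ℓ))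
    (E' : Finset (Fin L)) (ℓ₀ : Fin L) :
    ∫ x : Obs L, pdens f g E' x * Real.log (f ℓ₀ (x ℓ₀) / g ℓ₀ (x ℓ₀)) =
      ∫ t, sensorDens f g E' ℓ₀ t * Real.log (f ℓ₀ t / g ℓ₀ t) := by
  simp_rw [pdens_eq_prod_sensorDens]
  exact integral_pi_prod_mul_apply _ (fun t => Real.log (f ℓ₀ t / g ℓ₀ t)) ℓ₀
    fun ℓ _ => (isPosDensity_sensorDens hf hg E' ℓ).int_one

lemma integrable_sensorDens_mul_log
    (hDfg : ∀ ℓ, Integrable (fun t : ℝ => f ℓ t * Real.log (f ℓ t / g ℓ t)) volume)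
    (hDgf : ∀ ℓ, Integrable (fun t : ℝ => g ℓ t * Real.log (g ℓ t / f ℓ t)) volume)
    (E' : Finset (Fin L)) (ℓ : Fin L) :
    Integrable (fun t => sensorDens f g E' ℓ t * Real.log (f ℓ t / g ℓ t)) := by
  unfold sensorDens
  split_ifs
  · exact hDfg ℓ
  · refine (hDgf ℓ).neg.congr (ae_of_all _ fun t => ?_)
    simp only [Pi.neg_apply, log_div_eq_neg_log_div (f ℓ t), mul_neg]

lemma integrable_pdens_mul_log_apply
    (hf : ∀ ℓ, IsPosDensity (f ℓ)) (hg : ∀ ℓ, IsPosDensity (g ℓ))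
    (hDfg : ∀ ℓ, Integrable (fun t : ℝ => f ℓ t * Real.log (f ℓ t / g ℓ t)) volume)
    (hDgf : ∀ ℓ, Integrable (fun t : ℝ => g ℓ t * Real.log (g ℓ t / f ℓ t)) volume)
    (E' : Finset (Fin L)) (ℓ₀ : Fin L) :
    Integrable fun x : Obs L => pdens f g E' x * Real.log (f ℓ₀ (x ℓ₀) / g ℓ₀ (x ℓ₀)) := by
  simp_rw [pdens_eq_prod_sensorDens]
  exact integrable_pi_prod_mul_apply (fun ℓ _ => (isPosDensity_sensorDens hf hg E' ℓ).integrable_s16)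
    (integrable_sensorDens_mul_log hDfg hDgf E' ℓ₀)

lemma integral_sensorDens_mul_log (E' : Finset (Fin L)) (ℓ : Fin L) :
    ∫ t, sensorDens f g E' ℓ t * Real.log (f ℓ t / g ℓ t) =
      if ℓ ∈ E' then ∫ t, f ℓ t * Real.log (f ℓ t / g ℓ t)
      else -∫ t, g ℓ t * Real.log (g ℓ t / f ℓ t) := by
  unfold sensorDens
  split_ifs
  · rfl
  · simp only [log_div_eq_neg_log_div (f ℓ _), mul_neg, integral_neg]

lemma integral_pdens_mul_log_pdens_div_gdens
    (hf : ∀ ℓ, IsPosDensity (f ℓ)) (hg : ∀ ℓ, IsPosDensity (g ℓ))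
    (hDfg : ∀ ℓ, Integrable (fun t : ℝ => f ℓ t * Real.log (f ℓ t / g ℓ t)) volume)
    (hDgf : ∀ ℓ, Integrable (fun t : ℝ => g ℓ t * Real.log (g ℓ t / f ℓ t)) volume)
    (E E' : Finset (Fin L)) :
    ∫ x : Obs L, pdens f g E' x * Real.log (pdens f g E x / gdens g x) =
      (∑ ℓ ∈ E ∩ E', ∫ t, f ℓ t * Real.log (f ℓ t / g ℓ t)) -
        ∑ ℓ ∈ E \ E', ∫ t, g ℓ t * Real.log (g ℓ t / f ℓ t) := by
  simp_rw [log_pdens_div_gdens (fun ℓ => (hf ℓ).pos) (fun ℓ => (hg ℓ).pos), mul_sum]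
  rw [integral_finsetSum E
    fun ℓ _ => integrable_pdens_mul_log_apply hf hg hDfg hDgf E' ℓ]
  simp_rw [integral_pdens_mul_log_apply hf hg, integral_sensorDens_mul_log]
  rw [← sum_inter_add_sum_sdiff E E', sub_eq_add_neg, ← sum_neg_distrib]
  congr 1 <;> refine sum_congr rfl fun ℓ hℓ => ?_
  · rw [if_pos (mem_inter.1 hℓ).2]
  · rw [if_neg (mem_sdiff.1 hℓ).2]

end SensorModel

theorem stmt16_general {L m : ℕ}
    (f g : Fin L → ℝ → ℝ)
    (hf : ∀ ℓ, IsPosDensity (f ℓ)) (hg : ∀ ℓ, IsPosDensity (g ℓ))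
    (hDfg : ∀ ℓ, Integrable (fun t : ℝ => f ℓ t * Real.log (f ℓ t / g ℓ t)) volume)
    (hDgf : ∀ ℓ, Integrable (fun t : ℝ => g ℓ t * Real.log (g ℓ t / f ℓ t)) volume)
    (hDfg_pos : ∀ ℓ, 0 < ∫ t : ℝ, f ℓ t * Real.log (f ℓ t / g ℓ t))
    (hDgf_pos : ∀ ℓ, 0 < ∫ t : ℝ, g ℓ t * Real.log (g ℓ t / f ℓ t))
    (E E' : Finset (Fin L)) (hE : E.card = m) (hE' : E'.card = m) (hne : E ≠ E') :
    (∫ x : Obs L, pdens f g E' x * Real.log (pdens f g E x / gdens g x)) =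
        (∑ ℓ ∈ E ∩ E', ∫ t : ℝ, f ℓ t * Real.log (f ℓ t / g ℓ t)) -
          ∑ ℓ ∈ E \ E', ∫ t : ℝ, g ℓ t * Real.log (g ℓ t / f ℓ t) ∧
      (∫ x : Obs L, pdens f g E' x * Real.log (pdens f g E x / gdens g x)) <
        ∫ x : Obs L, pdens f g E x * Real.log (pdens f g E x / gdens g x) ∧
      (∫ x : Obs L, pdens f g E x * Real.log (pdens f g E x / gdens g x)) =
        ∑ ℓ ∈ E, ∫ t : ℝ, f ℓ t * Real.log (f ℓ t / g ℓ t) := by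
  have hcross := integral_pdens_mul_log_pdens_div_gdens hf hg hDfg hDgf E E'
  have hself := integral_pdens_mul_log_pdens_div_gdens hf hg hDfg hDgf E E
  rw [inter_self, Finset.sdiff_self, sum_empty, sub_zero] at hself
  refine ⟨hcross, ?_, hself⟩
  have hsdiff : (E \ E').Nonempty :=
    sdiff_nonempty.2 fun hsub => hne (eq_of_subset_of_card_le hsub (hE' ▸ hE).ge)
  have hsplit := sum_inter_add_sum_sdiff E E' fun ℓ => ∫ t, f ℓ t * Real.log (f ℓ t / g ℓ t)
  have hDfg_sum := sum_pos (fun ℓ _ => hDfg_pos ℓ) hsdiff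
  have hDgf_sum := sum_pos (fun ℓ _ => hDgf_pos ℓ) hsdiff
  rw [hcross, hself]
  linarith

/-- Cross drifts between two anomaly placements.  For distinct size-`m`
sets `E ≠ E'` with finite, strictly positive KL divergences at every sensor,
`∫ p_{E'} log(p_E/g) = ∑_{ℓ∈E∩E'} D(f_ℓ‖g_ℓ) − ∑_{ℓ∈E∖E'} D(g_ℓ‖f_ℓ)`, and consequently
`∫ p_{E'} log(p_E/g) < ∫ p_E log(p_E/g) = ∑_{ℓ∈E} D(f_ℓ‖g_ℓ)`. -/
theorem stmt16 {L m : ℕ} (hL : 1 ≤ L) (hm : 1 ≤ m) (hmL : m ≤ L)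
    (f g : Fin L → ℝ → ℝ)
    (hf : ∀ ℓ, IsPosDensity (f ℓ)) (hg : ∀ ℓ, IsPosDensity (g ℓ))
    (hfg : ∀ ℓ, 0 < volume {t | f ℓ t ≠ g ℓ t})
    (hDfg : ∀ ℓ, Integrable (fun t : ℝ => f ℓ t * Real.log (f ℓ t / g ℓ t)) volume)
    (hDgf : ∀ ℓ, Integrable (fun t : ℝ => g ℓ t * Real.log (g ℓ t / f ℓ t)) volume)
    (hDfg_pos : ∀ ℓ, 0 < ∫ t : ℝ, f ℓ t * Real.log (f ℓ t / g ℓ t))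
    (hDgf_pos : ∀ ℓ, 0 < ∫ t : ℝ, g ℓ t * Real.log (g ℓ t / f ℓ t))
    (E E' : Finset (Fin L)) (hE : E.card = m) (hE' : E'.card = m) (hne : E ≠ E') :
    (∫ x : Obs L, pdens f g E' x * Real.log (pdens f g E x / gdens g x)) =
        (∑ ℓ ∈ E ∩ E', ∫ t : ℝ, f ℓ t * Real.log (f ℓ t / g ℓ t)) -
          ∑ ℓ ∈ E \ E', ∫ t : ℝ, g ℓ t * Real.log (g ℓ t / f ℓ t) ∧
      (∫ x : Obs L, pdens f g E' x * Real.log (pdens f g E x / gdens g x)) <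
        ∫ x : Obs L, pdens f g E x * Real.log (pdens f g E x / gdens g x) ∧
      (∫ x : Obs L, pdens f g E x * Real.log (pdens f g E x / gdens g x)) =
        ∑ ℓ ∈ E, ∫ t : ℝ, f ℓ t * Real.log (f ℓ t / g ℓ t) :=
  stmt16_general f g hf hg hDfg hDgf hDfg_pos hDgf_pos E E' hE hE' hne

end MovingAnomaly
end
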